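/- arXiv:1902.06190 — 5 statements merged into one kernel-verified Lean document; each statement's English description precedes it below -/
import Mathlib

section
/- Let ⪯ be the preorder generated by (transitive closure of the union of) two string preorders (I)[J](K) and (I')[J'](K') on [n]. If neither I ∪ J ⊆ I' nor I' ∪ J' ⊆ I holds, then ⪯ equals the string preorder (I ∩ I')[J ∪ J' ∪ (I ∩ K') ∪ (I' ∩ K)](K ∩ K'). -/
/-- The string preorder `(I)[J](K)` on `Fin n` determined by a partition into three
ordered levels `I < J < K`, where `J` is a full level and `I`, `K` are empty levels. -/
def stringPre {n : ℕ} (I J K : Finset (Fin n)) (x y : Fin n) : Prop :=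
  x = y ∨ (x ∈ I ∧ (y ∈ J ∨ y ∈ K)) ∨ (x ∈ J ∧ (y ∈ J ∨ y ∈ K))

/-- If neither `I ∪ J ⊆ I'` nor `I' ∪ J' ⊆ I`, then the transitive closure of the union
of the string preorders `(I)[J](K)` and `(I')[J'](K')` is the string preorder
`(I ∩ I')[J ∪ J' ∪ (I ∩ K') ∪ (I' ∩ K)](K ∩ K')`. -/
theorem stmt3 {n : ℕ} (I J K I' J' K' : Finset (Fin n))
    (hu : I ∪ J ∪ K = Finset.univ) (hIJ : Disjoint I J) (hIK : Disjoint I K)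
    (hJK : Disjoint J K)
    (hu' : I' ∪ J' ∪ K' = Finset.univ) (hIJ' : Disjoint I' J') (hIK' : Disjoint I' K')
    (hJK' : Disjoint J' K')
    (h1 : ¬ I ∪ J ⊆ I') (h2 : ¬ I' ∪ J' ⊆ I) :
    Relation.TransGen (fun a b => stringPre I J K a b ∨ stringPre I' J' K' a b)
      = stringPre (I ∩ I') (J ∪ J' ∪ (I ∩ K') ∪ (I' ∩ K)) (K ∩ K') := by
  classical
  have mem : ∀ x : Fin n, x ∈ I ∨ x ∈ J ∨ x ∈ K := fun x => by
    have hx : x ∈ I ∪ J ∪ K := hu ▸ Finset.mem_univ x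
    simpa [Finset.mem_union, or_assoc] using hx
  have mem' : ∀ x : Fin n, x ∈ I' ∨ x ∈ J' ∨ x ∈ K' := fun x => by
    have hx : x ∈ I' ∪ J' ∪ K' := hu' ▸ Finset.mem_univ x
    simpa [Finset.mem_union, or_assoc] using hx
  obtain ⟨a, haIJ0, haI'⟩ := Finset.not_subset.mp h1
  obtain ⟨b, hbIJ0, hbI⟩ := Finset.not_subset.mp h2
  rw [Finset.mem_union] at haIJ0 hbIJ0
  have haJK' : a ∈ J' ∨ a ∈ K' := by
    rcases mem' a with h | h | h
    exacts [absurd h haI', Or.inl h, Or.inr h]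
  have hbJK : b ∈ J ∨ b ∈ K := by
    rcases mem b with h | h | h
    exacts [absurd h hbI, Or.inl h, Or.inr h]
  -- membership helpers for the target levels
  have qside : ∀ q : Fin n, ((q ∈ J ∨ q ∈ K) ∨ (q ∈ J' ∨ q ∈ K')) →
      (q ∈ J ∪ J' ∪ (I ∩ K') ∪ (I' ∩ K) ∨ q ∈ K ∩ K') := by
    intro q hq
    rcases hq with (h | h) | (h | h)
    · exact Or.inl (by simp [Finset.mem_union, h])
    · rcases mem' q with h' | h' | h'
      · exact Or.inl (by simp [Finset.mem_union, Finset.mem_inter, h, h'])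
      · exact Or.inl (by simp [Finset.mem_union, h'])
      · exact Or.inr (Finset.mem_inter.mpr ⟨h, h'⟩)
    · exact Or.inl (by simp [Finset.mem_union, h])
    · rcases mem q with h' | h' | h'
      · exact Or.inl (by simp [Finset.mem_union, Finset.mem_inter, h, h'])
      · exact Or.inl (by simp [Finset.mem_union, h'])
      · exact Or.inr (Finset.mem_inter.mpr ⟨h', h⟩)
  have pside : ∀ p : Fin n, ((p ∈ I ∨ p ∈ J) ∨ (p ∈ I' ∨ p ∈ J')) →
      (p ∈ I ∩ I' ∨ p ∈ J ∪ J' ∪ (I ∩ K') ∪ (I' ∩ K)) := by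
    intro p hp
    rcases hp with (h | h) | (h | h)
    · rcases mem' p with h' | h' | h'
      · exact Or.inl (Finset.mem_inter.mpr ⟨h, h'⟩)
      · exact Or.inr (by simp [Finset.mem_union, h'])
      · exact Or.inr (by simp [Finset.mem_union, Finset.mem_inter, h, h'])
    · exact Or.inr (by simp [Finset.mem_union, h])
    · rcases mem p with h' | h' | h'
      · exact Or.inl (Finset.mem_inter.mpr ⟨h', h⟩)
      · exact Or.inr (by simp [Finset.mem_union, h'])
      · exact Or.inr (by simp [Finset.mem_union, Finset.mem_inter, h, h'])
    · exact Or.inr (by simp [Finset.mem_union, h])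
  have build : ∀ p q : Fin n,
      (p ∈ I ∩ I' ∨ p ∈ J ∪ J' ∪ (I ∩ K') ∪ (I' ∩ K)) →
      (q ∈ J ∪ J' ∪ (I ∩ K') ∪ (I' ∩ K) ∨ q ∈ K ∩ K') →
      stringPre (I ∩ I') (J ∪ J' ∪ (I ∩ K') ∪ (I' ∩ K)) (K ∩ K') p q := by
    intro p q hp hq
    rcases hp with h | h
    exacts [Or.inr (Or.inl ⟨h, hq⟩), Or.inr (Or.inr ⟨h, hq⟩)]
  -- each generator is contained in the target
  have incl : ∀ p q : Fin n, (stringPre I J K p q ∨ stringPre I' J' K' p q) →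
      stringPre (I ∩ I') (J ∪ J' ∪ (I ∩ K') ∪ (I' ∩ K)) (K ∩ K') p q := by
    intro p q h
    rcases h with (rfl | ⟨hp, hq⟩ | ⟨hp, hq⟩) | (rfl | ⟨hp, hq⟩ | ⟨hp, hq⟩)
    · exact Or.inl rfl
    · exact build p q (pside p (Or.inl (Or.inl hp))) (qside q (Or.inl hq))
    · exact build p q (pside p (Or.inl (Or.inr hp))) (qside q (Or.inl hq))
    · exact Or.inl rfl
    · exact build p q (pside p (Or.inr (Or.inl hp))) (qside q (Or.inr hq))
    · exact build p q (pside p (Or.inr (Or.inr hp))) (qside q (Or.inr hq))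
  -- the target is transitive
  have ttrans : ∀ p q r : Fin n,
      stringPre (I ∩ I') (J ∪ J' ∪ (I ∩ K') ∪ (I' ∩ K)) (K ∩ K') p q →
      stringPre (I ∩ I') (J ∪ J' ∪ (I ∩ K') ∪ (I' ∩ K)) (K ∩ K') q r →
      stringPre (I ∩ I') (J ∪ J' ∪ (I ∩ K') ∪ (I' ∩ K)) (K ∩ K') p r := by
    intro p q r hpq hqr
    rcases hpq with rfl | hpq
    · exact hqr
    rcases hqr with rfl | hqr
    · exact Or.inr hpq
    have hA : ∀ z : Fin n, z ∈ I ∩ I' →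
        (z ∈ J ∪ J' ∪ (I ∩ K') ∪ (I' ∩ K) ∨ z ∈ K ∩ K') → False := by
      intro z hz h
      rw [Finset.mem_inter] at hz
      rcases h with h | h
      · simp only [Finset.mem_union, Finset.mem_inter] at h
        rcases h with ((h | h) | h) | h
        · exact Finset.disjoint_left.mp hIJ hz.1 h
        · exact Finset.disjoint_left.mp hIJ' hz.2 h
        · exact Finset.disjoint_left.mp hIK' hz.2 h.2
        · exact Finset.disjoint_left.mp hIK hz.1 h.2
      · rw [Finset.mem_inter] at h
        exact Finset.disjoint_left.mp hIK hz.1 h.1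
    rcases hpq with ⟨hpA, hqBC⟩ | ⟨hpB, hqBC⟩ <;>
      rcases hqr with ⟨hqA, hrBC⟩ | ⟨hqB, hrBC⟩
    · exact absurd hqBC (fun h => hA q hqA h)
    · exact Or.inr (Or.inl ⟨hpA, hrBC⟩)
    · exact absurd hqBC (fun h => hA q hqA h)
    · exact Or.inr (Or.inr ⟨hpB, hrBC⟩)
  -- step builders
  have r1 : ∀ p q : Fin n, (p ∈ I ∨ p ∈ J) → (q ∈ J ∨ q ∈ K) →
      (stringPre I J K p q ∨ stringPre I' J' K' p q) := by
    intro p q hp hq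
    rcases hp with h | h
    exacts [Or.inl (Or.inr (Or.inl ⟨h, hq⟩)), Or.inl (Or.inr (Or.inr ⟨h, hq⟩))]
  have r2 : ∀ p q : Fin n, (p ∈ I' ∨ p ∈ J') → (q ∈ J' ∨ q ∈ K') →
      (stringPre I J K p q ∨ stringPre I' J' K' p q) := by
    intro p q hp hq
    rcases hp with h | h
    exacts [Or.inr (Or.inr (Or.inl ⟨h, hq⟩)), Or.inr (Or.inr (Or.inr ⟨h, hq⟩))]
  funext x y
  apply propext
  constructor
  · intro h
    induction h with
    | single h => exact incl _ _ h
    | tail _ h ih => exact ttrans _ _ _ ih (incl _ _ h)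
  · intro hT
    rcases hT with rfl | hT
    · exact Relation.TransGen.single (Or.inl (Or.inl rfl))
    obtain ⟨hxp, hyp⟩ : (x ∈ I ∩ I' ∨ x ∈ J ∪ J' ∪ (I ∩ K') ∪ (I' ∩ K)) ∧
        (y ∈ J ∪ J' ∪ (I ∩ K') ∪ (I' ∩ K) ∨ y ∈ K ∩ K') := by
      rcases hT with ⟨hp1, hp2⟩ | ⟨hp1, hp2⟩
      exacts [⟨Or.inl hp1, hp2⟩, ⟨Or.inr hp1, hp2⟩]
    have hx : (x ∈ I ∨ x ∈ J) ∨ (x ∈ I' ∨ x ∈ J') := by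
      rcases hxp with h | h
      · exact Or.inl (Or.inl (Finset.mem_inter.mp h).1)
      · simp only [Finset.mem_union, Finset.mem_inter] at h
        rcases h with ((h | h) | h) | h
        exacts [Or.inl (Or.inr h), Or.inr (Or.inr h),
          Or.inl (Or.inl h.1), Or.inr (Or.inl h.1)]
    have hy : (y ∈ J ∨ y ∈ K) ∨ (y ∈ J' ∨ y ∈ K') := by
      rcases hyp with h | h
      · simp only [Finset.mem_union, Finset.mem_inter] at h
        rcases h with ((h | h) | h) | h
        exacts [Or.inl (Or.inl h), Or.inr (Or.inl h),
          Or.inr (Or.inr h.2), Or.inl (Or.inr h.2)]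
      · exact Or.inl (Or.inr (Finset.mem_inter.mp h).1)
    rcases hx with hx | hx
    · rcases hy with hy | hy
      · exact Relation.TransGen.head (r1 x b hx hbJK)
          (Relation.TransGen.head (r2 b a hbIJ0 haJK')
            (Relation.TransGen.single (r1 a y haIJ0 hy)))
      · exact Relation.TransGen.head (r1 x b hx hbJK)
          (Relation.TransGen.single (r2 b y hbIJ0 hy))
    · rcases hy with hy | hy
      · exact Relation.TransGen.head (r2 x a hx haJK')
          (Relation.TransGen.single (r1 a y haIJ0 hy))
      · exact Relation.TransGen.head (r2 x a hx haJK')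
          (Relation.TransGen.head (r1 a b haIJ0 hbJK)
            (Relation.TransGen.single (r2 b y hbIJ0 hy)))
end

section
/- Let (I)[J](K) and (I')[J'](K') be string preorders on [n] (partitions with middle level full). If I ∪ J ⊆ I', then the transitive closure of their union equals the string preorder (I)[J](K ∩ I')[J'](K') with four levels (suppressing the level K ∩ I' if it is empty): all of I strictly below J, J strictly below K ∩ I', that below J', and J' below K', with J and J' full levels and the others empty. -/
/-- The four-level string preorder `(A)[B](C)[D](E)` on `Fin n`: levels ordered
`A < B < C < D < E`, with `B` and `D` full levels and `A`, `C`, `E` empty levels. -/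
def stringPre4 {n : ℕ} (A B C D E : Finset (Fin n)) (x y : Fin n) : Prop :=
  x = y ∨ (x ∈ A ∧ (y ∈ B ∨ y ∈ C ∨ y ∈ D ∨ y ∈ E)) ∨
    (x ∈ B ∧ (y ∈ B ∨ y ∈ C ∨ y ∈ D ∨ y ∈ E)) ∨
    (x ∈ C ∧ (y ∈ D ∨ y ∈ E)) ∨ (x ∈ D ∧ (y ∈ D ∨ y ∈ E))

/-- If `I ∪ J ⊆ I'`, the transitive closure of the union of the string preorders
`(I)[J](K)` and `(I')[J'](K')` is the four-level string preorder `(I)[J](K ∩ I')[J'](K')`. -/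
theorem stmt4 {n : ℕ} (I J K I' J' K' : Finset (Fin n))
    (hu : I ∪ J ∪ K = Finset.univ) (hIJ : Disjoint I J) (hIK : Disjoint I K)
    (hJK : Disjoint J K)
    (hu' : I' ∪ J' ∪ K' = Finset.univ) (hIJ' : Disjoint I' J') (hIK' : Disjoint I' K')
    (hJK' : Disjoint J' K')
    (hsub : I ∪ J ⊆ I') :
    Relation.TransGen (fun a b => stringPre I J K a b ∨ stringPre I' J' K' a b)
      = stringPre4 I J (K ∩ I') J' K' := by
  classical
  have cover : ∀ x : Fin n, x ∈ I ∨ x ∈ J ∨ x ∈ K := fun x => by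
    have : x ∈ I ∪ J ∪ K := hu ▸ Finset.mem_univ x
    simpa [Finset.mem_union, or_assoc] using this
  have cover' : ∀ x : Fin n, x ∈ I' ∨ x ∈ J' ∨ x ∈ K' := fun x => by
    have : x ∈ I' ∪ J' ∪ K' := hu' ▸ Finset.mem_univ x
    simpa [Finset.mem_union, or_assoc] using this
  have dIJ : ∀ x : Fin n, x ∈ I → x ∉ J := fun x h => Finset.disjoint_left.mp hIJ h
  have dIK : ∀ x : Fin n, x ∈ I → x ∉ K := fun x h => Finset.disjoint_left.mp hIK h
  have dJK : ∀ x : Fin n, x ∈ J → x ∉ K := fun x h => Finset.disjoint_left.mp hJK h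
  have dIJ' : ∀ x : Fin n, x ∈ I' → x ∉ J' := fun x h => Finset.disjoint_left.mp hIJ' h
  have dIK' : ∀ x : Fin n, x ∈ I' → x ∉ K' := fun x h => Finset.disjoint_left.mp hIK' h
  have dJK' : ∀ x : Fin n, x ∈ J' → x ∉ K' := fun x h => Finset.disjoint_left.mp hJK' h
  have hIsub : ∀ x : Fin n, x ∈ I → x ∈ I' := fun x h =>
    hsub (Finset.mem_union_left _ h)
  have hJsub : ∀ x : Fin n, x ∈ J → x ∈ I' := fun x h =>
    hsub (Finset.mem_union_right _ h)
  -- J' and K' are contained in K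
  have hJ'K : ∀ x : Fin n, x ∈ J' → x ∈ K := by
    intro x h
    rcases cover x with h1 | h1 | h1
    · exact absurd h (dIJ' x (hIsub x h1))
    · exact absurd h (dIJ' x (hJsub x h1))
    · exact h1
  have hK'K : ∀ x : Fin n, x ∈ K' → x ∈ K := by
    intro x h
    rcases cover x with h1 | h1 | h1
    · exact absurd h (dIK' x (hIsub x h1))
    · exact absurd h (dIK' x (hJsub x h1))
    · exact h1
  -- the union relation is contained in the four-level preorder
  have le_step : ∀ a b : Fin n,
      (stringPre I J K a b ∨ stringPre I' J' K' a b) →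
      stringPre4 I J (K ∩ I') J' K' a b := by
    intro a b h
    rcases h with h | h
    · rcases h with rfl | ⟨ha, hb⟩ | ⟨ha, hb⟩
      · exact Or.inl rfl
      · rcases hb with hb | hb
        · exact Or.inr (Or.inl ⟨ha, Or.inl hb⟩)
        · rcases cover' b with h1 | h1 | h1
          · exact Or.inr (Or.inl ⟨ha, Or.inr (Or.inl (Finset.mem_inter.mpr ⟨hb, h1⟩))⟩)
          · exact Or.inr (Or.inl ⟨ha, Or.inr (Or.inr (Or.inl h1))⟩)
          · exact Or.inr (Or.inl ⟨ha, Or.inr (Or.inr (Or.inr h1))⟩)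
      · rcases hb with hb | hb
        · exact Or.inr (Or.inr (Or.inl ⟨ha, Or.inl hb⟩))
        · rcases cover' b with h1 | h1 | h1
          · exact Or.inr (Or.inr (Or.inl ⟨ha, Or.inr (Or.inl (Finset.mem_inter.mpr ⟨hb, h1⟩))⟩))
          · exact Or.inr (Or.inr (Or.inl ⟨ha, Or.inr (Or.inr (Or.inl h1))⟩))
          · exact Or.inr (Or.inr (Or.inl ⟨ha, Or.inr (Or.inr (Or.inr h1))⟩))
    · rcases h with rfl | ⟨ha, hb⟩ | ⟨ha, hb⟩
      · exact Or.inl rfl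
      · -- a ∈ I', b ∈ J' ∪ K'
        rcases cover a with h1 | h1 | h1
        · exact Or.inr (Or.inl ⟨h1, Or.inr (Or.inr (by tauto))⟩)
        · exact Or.inr (Or.inr (Or.inl ⟨h1, Or.inr (Or.inr (by tauto))⟩))
        · exact Or.inr (Or.inr (Or.inr (Or.inl ⟨Finset.mem_inter.mpr ⟨h1, ha⟩, hb⟩)))
      · exact Or.inr (Or.inr (Or.inr (Or.inr ⟨ha, hb⟩)))
  -- transitivity of the four-level preorder
  have htrans : ∀ a b c : Fin n,
      stringPre4 I J (K ∩ I') J' K' a b → stringPre4 I J (K ∩ I') J' K' b c →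
      stringPre4 I J (K ∩ I') J' K' a c := by
    intro a b c hab hbc
    unfold stringPre4 at *
    simp only [Finset.mem_inter] at *
    rcases hab with rfl | hab
    · exact hbc
    rcases hbc with rfl | hbc
    · exact Or.inr hab
    -- any nontrivial relation into c gives the weak conclusion about c
    have hPc : c ∈ J ∨ (c ∈ K ∧ c ∈ I') ∨ c ∈ J' ∨ c ∈ K' := by
      rcases hbc with ⟨_, h⟩ | ⟨_, h⟩ | ⟨_, h⟩ | ⟨_, h⟩
      · exact h
      · exact h
      · exact Or.inr (Or.inr h)
      · exact Or.inr (Or.inr h)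
    rcases hab with ⟨ha, _⟩ | ⟨ha, _⟩ | ⟨ha, hb⟩ | ⟨ha, hb⟩
    · exact Or.inr (Or.inl ⟨ha, hPc⟩)
    · exact Or.inr (Or.inr (Or.inl ⟨ha, hPc⟩))
    all_goals {
      have hQc : c ∈ J' ∨ c ∈ K' := by
        rcases hb with hb | hb
        · rcases hbc with ⟨h, _⟩ | ⟨h, _⟩ | ⟨⟨_, h⟩, _⟩ | ⟨_, h⟩
          · exact absurd hb (dIJ' b (hIsub b h))
          · exact absurd hb (dIJ' b (hJsub b h))
          · exact absurd hb (dIJ' b h)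
          · exact h
        · rcases hbc with ⟨h, _⟩ | ⟨h, _⟩ | ⟨⟨_, h⟩, _⟩ | ⟨h, _⟩
          · exact absurd hb (dIK' b (hIsub b h))
          · exact absurd hb (dIK' b (hJsub b h))
          · exact absurd hb (dIK' b h)
          · exact absurd hb (dJK' b h)
      first
      | exact Or.inr (Or.inr (Or.inr (Or.inl ⟨ha, hQc⟩)))
      | exact Or.inr (Or.inr (Or.inr (Or.inr ⟨ha, hQc⟩)))
    }
  funext a b
  apply propext
  constructor
  · intro h
    induction h with
    | single h => exact le_step _ _ h
    | tail _ h ih => exact htrans _ _ _ ih (le_step _ _ h)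
  · intro h
    apply Relation.TransGen.single
    rcases h with rfl | ⟨ha, hb⟩ | ⟨ha, hb⟩ | ⟨ha, hb⟩ | ⟨ha, hb⟩
    · exact Or.inl (Or.inl rfl)
    · -- a ∈ I
      rcases hb with hb | hb | hb | hb
      · exact Or.inl (Or.inr (Or.inl ⟨ha, Or.inl hb⟩))
      · exact Or.inl (Or.inr (Or.inl ⟨ha, Or.inr (Finset.mem_inter.mp hb).1⟩))
      · exact Or.inr (Or.inr (Or.inl ⟨hIsub a ha, Or.inl hb⟩))
      · exact Or.inr (Or.inr (Or.inl ⟨hIsub a ha, Or.inr hb⟩))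
    · -- a ∈ J
      rcases hb with hb | hb | hb | hb
      · exact Or.inl (Or.inr (Or.inr ⟨ha, Or.inl hb⟩))
      · exact Or.inl (Or.inr (Or.inr ⟨ha, Or.inr (Finset.mem_inter.mp hb).1⟩))
      · exact Or.inr (Or.inr (Or.inl ⟨hJsub a ha, Or.inl hb⟩))
      · exact Or.inr (Or.inr (Or.inl ⟨hJsub a ha, Or.inr hb⟩))
    · -- a ∈ K ∩ I'
      exact Or.inr (Or.inr (Or.inl ⟨(Finset.mem_inter.mp ha).2, hb⟩))
    · -- a ∈ J'
      exact Or.inr (Or.inr (Or.inr ⟨ha, hb⟩))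
end

section
/- Let (I)[J](K) and (I')[J'](K') be string preorders on [n] with |J| = |J'| = k−1 (elementary preorders), and suppose neither I ∪ J ⊆ I' nor I' ∪ J' ⊆ I. Then their transitive-closure product (I ∩ I')[J ∪ J' ∪ (I ∩ K') ∪ (I' ∩ K)](K ∩ K') has middle level of cardinality at least k−1, and it is itself elementary (middle level of cardinality exactly k−1) if and only if (I)[J](K) = (I')[J'](K'). -/
/-- Elementary preorders `(I)[J](K)` and `(I')[J'](K')` on `[n]` (partitions with
`|J| = |J'| = k-1`), with neither `I ∪ J ⊆ I'` nor `I' ∪ J' ⊆ I`: the middle level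
`J ∪ J' ∪ (I ∩ K') ∪ (I' ∩ K)` of their transitive-closure product has cardinality
at least `k-1`, with equality iff the two preorders coincide. -/
theorem stmt5 {n k : ℕ} (hk : 3 ≤ k) (hkn : k ≤ n) (I J K I' J' K' : Finset (Fin n))
    (hu : I ∪ J ∪ K = Finset.univ) (hIJ : Disjoint I J) (hIK : Disjoint I K)
    (hJK : Disjoint J K)
    (hu' : I' ∪ J' ∪ K' = Finset.univ) (hIJ' : Disjoint I' J') (hIK' : Disjoint I' K')
    (hJK' : Disjoint J' K')
    (hJcard : J.card = k - 1) (hJcard' : J'.card = k - 1)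
    (h1 : ¬ I ∪ J ⊆ I') (h2 : ¬ I' ∪ J' ⊆ I) :
    k - 1 ≤ (J ∪ J' ∪ I ∩ K' ∪ I' ∩ K).card ∧
    ((J ∪ J' ∪ I ∩ K' ∪ I' ∩ K).card = k - 1 ↔ I = I' ∧ J = J' ∧ K = K') := by
  have hJM : J ⊆ J ∪ J' ∪ I ∩ K' ∪ I' ∩ K := by intro x hx; simp [hx]
  refine ⟨hJcard ▸ Finset.card_le_card hJM, ?_, ?_⟩
  · intro hc
    have hM : J ∪ J' ∪ I ∩ K' ∪ I' ∩ K = J :=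
      (Finset.eq_of_subset_of_card_le hJM (by rw [hc, hJcard])).symm
    have hJ'J : J' ⊆ J := by rw [← hM]; intro x hx; simp [hx]
    have hJJ' : J = J' :=
      (Finset.eq_of_subset_of_card_le hJ'J (by rw [hJcard, hJcard'])).symm
    have hIK'e : I ∩ K' = ∅ := by
      rw [Finset.eq_empty_iff_forall_notMem]
      intro x hx
      have hxJ : x ∈ J := by
        have : x ∈ J ∪ J' ∪ I ∩ K' ∪ I' ∩ K := by simp [hx]
        rwa [hM] at this
      exact Finset.disjoint_left.mp hIJ (Finset.mem_of_mem_inter_left hx) hxJ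
    have hI'Ke : I' ∩ K = ∅ := by
      rw [Finset.eq_empty_iff_forall_notMem]
      intro x hx
      have hxJ : x ∈ J := by
        have : x ∈ J ∪ J' ∪ I ∩ K' ∪ I' ∩ K := by simp [hx]
        rwa [hM] at this
      exact Finset.disjoint_left.mp hJK hxJ (Finset.mem_of_mem_inter_right hx)
    have hII' : I = I' := by
      ext x
      have hx' : x ∈ I' ∪ J' ∪ K' := hu' ▸ Finset.mem_univ x
      have hxu : x ∈ I ∪ J ∪ K := hu ▸ Finset.mem_univ x
      simp only [Finset.mem_union] at hx' hxu
      constructor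
      · intro hxI
        rcases hx' with (h | h) | h
        · exact h
        · exact absurd hxI (Finset.disjoint_right.mp hIJ (hJJ'.symm ▸ h))
        · exact absurd (Finset.mem_inter.mpr ⟨hxI, h⟩) (by simp [hIK'e])
      · intro hxI'
        rcases hxu with (h | h) | h
        · exact h
        · exact absurd (show x ∈ J' from hJJ' ▸ h) (Finset.disjoint_left.mp hIJ' hxI')
        · exact absurd (Finset.mem_inter.mpr ⟨hxI', h⟩) (by simp [hI'Ke])
    have hKK' : K = K' := by
      ext x
      have hx' : x ∈ I' ∪ J' ∪ K' := hu' ▸ Finset.mem_univ x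
      have hxu : x ∈ I ∪ J ∪ K := hu ▸ Finset.mem_univ x
      simp only [Finset.mem_union] at hx' hxu
      constructor
      · intro hxK
        rcases hx' with (h | h) | h
        · exact absurd (Finset.mem_inter.mpr ⟨h, hxK⟩) (by simp [hI'Ke])
        · exact absurd hxK (Finset.disjoint_left.mp hJK (hJJ'.symm ▸ h))
        · exact h
      · intro hxK'
        rcases hxu with (h | h) | h
        · exact absurd (Finset.mem_inter.mpr ⟨h, hxK'⟩) (by simp [hIK'e])
        · exact absurd hxK' (Finset.disjoint_left.mp hJK' (hJJ' ▸ h))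
        · exact h
    exact ⟨hII', hJJ', hKK'⟩
  · rintro ⟨rfl, rfl, rfl⟩
    rw [Finset.union_self, Finset.disjoint_iff_inter_eq_empty.mp hIK,
      Finset.union_empty, Finset.union_empty, hJcard]
end

section
/- Let ⪯ be the transitive closure of the union of string preorders (I)[J](K) and (I')[J'](K') on [n], and assume there exist x ∈ (I ∪ J) \ I' and x' ∈ (I' ∪ J') \ I. Then every element of J is equivalent (⪯ both ways) to every element of J', and both are equivalent to every element of I ∩ K' and of I' ∩ K. -/
lemma stringPre_mk {n : ℕ} {A B C : Finset (Fin n)} {u v : Fin n}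
    (h1 : u ∈ A ∨ u ∈ B) (h2 : v ∈ B ∨ v ∈ C) : stringPre A B C u v := by
  unfold stringPre; tauto

/-- Let `⪯` be the transitive closure of the union of the string preorders `(I)[J](K)`
and `(I')[J'](K')`, and assume there exist `x ∈ (I ∪ J) \ I'` and `x' ∈ (I' ∪ J') \ I`.
Then all elements of `J`, `J'`, `I ∩ K'` and `I' ∩ K` are mutually equivalent under `⪯`. -/
theorem stmt7 {n : ℕ} (I J K I' J' K' : Finset (Fin n))
    (hu : I ∪ J ∪ K = Finset.univ) (hIJ : Disjoint I J) (hIK : Disjoint I K)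
    (hJK : Disjoint J K)
    (hu' : I' ∪ J' ∪ K' = Finset.univ) (hIJ' : Disjoint I' J') (hIK' : Disjoint I' K')
    (hJK' : Disjoint J' K')
    (hx : ∃ x, x ∈ I ∪ J ∧ x ∉ I') (hx' : ∃ x', x' ∈ I' ∪ J' ∧ x' ∉ I) :
    ∀ a ∈ J ∪ J' ∪ I ∩ K' ∪ I' ∩ K, ∀ b ∈ J ∪ J' ∪ I ∩ K' ∪ I' ∩ K,
      Relation.TransGen (fun u v => stringPre I J K u v ∨ stringPre I' J' K' u v) a b ∧
      Relation.TransGen (fun u v => stringPre I J K u v ∨ stringPre I' J' K' u v) b a := by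
  obtain ⟨x, hx1, hx2⟩ := hx
  obtain ⟨x', hx1', hx2'⟩ := hx'
  -- x ∈ J' ∪ K'
  have hxJK' : x ∈ J' ∨ x ∈ K' := by
    have h : x ∈ I' ∪ J' ∪ K' := hu' ▸ Finset.mem_univ x
    simp only [Finset.mem_union] at h
    tauto
  -- x' ∈ J ∪ K
  have hx'JK : x' ∈ J ∨ x' ∈ K := by
    have h : x' ∈ I ∪ J ∪ K := hu ▸ Finset.mem_univ x'
    simp only [Finset.mem_union] at h
    tauto
  simp only [Finset.mem_union] at hx1 hx1'
  have e1 : (stringPre I J K x' x ∨ stringPre I' J' K' x' x) := Or.inr (stringPre_mk hx1' hxJK')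
  have e2 : (stringPre I J K x x' ∨ stringPre I' J' K' x x') := Or.inl (stringPre_mk hx1 hx'JK)
  have hub : ∀ a ∈ J ∪ J' ∪ I ∩ K' ∪ I' ∩ K,
      Relation.TransGen (fun u v => stringPre I J K u v ∨ stringPre I' J' K' u v) a x' ∧ Relation.TransGen (fun u v => stringPre I J K u v ∨ stringPre I' J' K' u v) x' a := by
    intro a ha
    simp only [Finset.mem_union, Finset.mem_inter] at ha
    rcases ha with ((haJ | haJ') | ⟨haI, haK'⟩) | ⟨haI', haK⟩
    · exact ⟨Relation.TransGen.single (Or.inl (stringPre_mk (Or.inr haJ) hx'JK)),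
        Relation.TransGen.head e1 (Relation.TransGen.single (Or.inl (stringPre_mk hx1 (Or.inl haJ))))⟩
    · exact ⟨Relation.TransGen.head (Or.inr (stringPre_mk (Or.inr haJ') hxJK'))
          (Relation.TransGen.single e2),
        Relation.TransGen.single (Or.inr (stringPre_mk hx1' (Or.inl haJ')))⟩
    · exact ⟨Relation.TransGen.single (Or.inl (stringPre_mk (Or.inl haI) hx'JK)),
        Relation.TransGen.single (Or.inr (stringPre_mk hx1' (Or.inr haK')))⟩
    · exact ⟨Relation.TransGen.head (Or.inr (stringPre_mk (Or.inl haI') hxJK'))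
          (Relation.TransGen.single e2),
        Relation.TransGen.head e1 (Relation.TransGen.single (Or.inl (stringPre_mk hx1 (Or.inr haK))))⟩
  intro a ha b hb
  obtain ⟨ha1, ha2⟩ := hub a ha
  obtain ⟨hb1, hb2⟩ := hub b hb
  exact ⟨ha1.trans hb2, hb1.trans ha2⟩
end

section
/- For 3 ≤ k < n < 2k, the total number of Baryshnikov basis elements in degree k−2 for Conf_k(ℝ,n), equivalently the rank of H^{k−2}(Conf_k(ℝ,n)), is β(k,n) = Σ_{i=k}^{n} C(n,i)·C(i−1,k−1). -/
open Finset

/-- For `3 ≤ k < n < 2k`, the number of Baryshnikov basis elements in degree `k-2`,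
i.e. partitions `[n] = I ⊔ J ⊔ K` (equivalently, pairs of disjoint `J`, `K`) with
`|J| = k-1` and `max(J ∪ K) ∈ K`, equals `β(k,n) = ∑_{i=k}^{n} C(n,i)·C(i-1,k-1)`. -/
theorem stmt9 {k n : ℕ} (hk : 3 ≤ k) (hkn : k < n) (hn2k : n < 2 * k) :
    ((Finset.univ : Finset (Finset (Fin n) × Finset (Fin n))).filter
        (fun p => Disjoint p.1 p.2 ∧ p.1.card = k - 1 ∧
          ∃ m ∈ p.2, ∀ j ∈ p.1 ∪ p.2, j ≤ m)).card
      = ∑ i ∈ Finset.Icc k n, n.choose i * (i - 1).choose (k - 1) := by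
  classical
  set Q : Finset (Fin n) × Finset (Fin n) → Prop := fun q =>
    q.2 ⊆ q.1 ∧ q.2.card = k - 1 ∧ ∃ m ∈ q.1, m ∉ q.2 ∧ ∀ x ∈ q.1, x ≤ m with hQ
  have h1 : ((Finset.univ : Finset (Finset (Fin n) × Finset (Fin n))).filter
        (fun p => Disjoint p.1 p.2 ∧ p.1.card = k - 1 ∧
          ∃ m ∈ p.2, ∀ j ∈ p.1 ∪ p.2, j ≤ m)).card
      = (Finset.univ.filter Q).card := by
    apply Finset.card_bij (fun p _ => (p.1 ∪ p.2, p.1))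
    · rintro ⟨J, K⟩ hp
      simp only [mem_filter, mem_univ, true_and] at hp ⊢
      obtain ⟨hd, hc, m, hmK, hm⟩ := hp
      refine ⟨subset_union_left, hc, m, mem_union_right _ hmK, ?_, hm⟩
      exact fun hmJ => (Finset.disjoint_left.mp hd hmJ) hmK
    · rintro ⟨J, K⟩ hp ⟨J', K'⟩ hp' h
      simp only [mem_filter, mem_univ, true_and] at hp hp'
      simp only [Prod.mk.injEq] at h
      obtain ⟨h1, h2⟩ := h
      have hK : K = (J ∪ K) \ J := by
        rw [Finset.union_sdiff_left, Finset.sdiff_eq_self_of_disjoint hp.1.symm]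
      have hK' : K' = (J' ∪ K') \ J' := by
        rw [Finset.union_sdiff_left, Finset.sdiff_eq_self_of_disjoint hp'.1.symm]
      exact Prod.ext h2 (by rw [hK, hK', h1, h2])
    · rintro ⟨S, J⟩ hq
      simp only [hQ, mem_filter, mem_univ, true_and] at hq
      obtain ⟨hJS, hc, m, hmS, hmJ, hm⟩ := hq
      refine ⟨(J, S \ J), ?_, ?_⟩
      · simp only [mem_filter, mem_univ, true_and]
        refine ⟨Finset.disjoint_sdiff, hc, m, Finset.mem_sdiff.mpr ⟨hmS, hmJ⟩, ?_⟩
        intro j hj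
        rw [Finset.union_sdiff_of_subset hJS] at hj
        exact hm j hj
      · simp [Finset.union_sdiff_of_subset hJS]
  rw [h1]
  have h2 : (Finset.univ.filter Q).card
      = ∑ S ∈ (Finset.univ : Finset (Fin n)).powerset,
          ((Finset.univ.filter Q).filter (fun q => q.1 = S)).card := by
    apply Finset.card_eq_sum_card_fiberwise
    intro q _
    simp
  rw [h2]
  have h3 : ∀ S ∈ (Finset.univ : Finset (Fin n)).powerset,
      ((Finset.univ.filter Q).filter (fun q => q.1 = S)).card
        = (S.card - 1).choose (k - 1) := by
    intro S _
    rcases S.eq_empty_or_nonempty with rfl | hS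
    · have : ((Finset.univ.filter Q).filter (fun q => q.1 = (∅ : Finset (Fin n)))) = ∅ := by
        ext q
        simp only [mem_filter, mem_univ, true_and, hQ, Finset.notMem_empty, iff_false]
        rintro ⟨⟨_, _, m, hm, _⟩, hq1⟩
        rw [hq1] at hm
        exact absurd hm (Finset.notMem_empty m)
      rw [this]
      simp [Nat.choose_eq_zero_of_lt (by omega : 0 < k - 1)]
    · have hmax := S.max'_mem hS
      have hcard : ((S.erase (S.max' hS)).powersetCard (k-1)).card
          = (S.card - 1).choose (k - 1) := by
        rw [Finset.card_powersetCard, Finset.card_erase_of_mem hmax]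
      rw [← hcard]
      apply Finset.card_bij (fun q _ => q.2)
      · rintro ⟨T, J⟩ hq
        simp only [hQ, mem_filter, mem_univ, true_and] at hq
        obtain ⟨⟨hJS, hc, m, hmS, hmJ, hm⟩, rfl⟩ := hq
        have hmeq : m = T.max' hS := le_antisymm (Finset.le_max' _ _ hmS) (hm _ (T.max'_mem hS))
        rw [Finset.mem_powersetCard]
        refine ⟨fun x hx => Finset.mem_erase.mpr ⟨?_, hJS hx⟩, hc⟩
        rintro rfl
        exact hmJ (hmeq ▸ hx)
      · rintro ⟨T, J⟩ hq ⟨T', J'⟩ hq' h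
        simp only [mem_filter] at hq hq'
        exact Prod.ext (hq.2.trans hq'.2.symm) h
      · intro J hJ
        rw [Finset.mem_powersetCard] at hJ
        refine ⟨(S, J), ?_, rfl⟩
        simp only [hQ, mem_filter, mem_univ, true_and]
        refine ⟨⟨fun x hx => Finset.mem_of_mem_erase (hJ.1 hx), hJ.2,
          S.max' hS, S.max'_mem hS, ?_, fun x hx => Finset.le_max' _ _ hx⟩, trivial⟩
        intro hmem
        exact (Finset.mem_erase.mp (hJ.1 hmem)).1 rfl
  rw [Finset.sum_congr rfl h3]
  have h4 : ∑ S ∈ (Finset.univ : Finset (Fin n)).powerset, (S.card - 1).choose (k - 1)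
      = ∑ i ∈ Finset.range (n + 1), n.choose i * (i - 1).choose (k - 1) := by
    rw [Finset.sum_powerset_apply_card (fun i => (i - 1).choose (k - 1))]
    simp [Finset.card_univ]
  rw [h4]
  have h5 : Finset.Icc k n = Finset.Ico k (n + 1) := by
    rw [Finset.Ico_add_one_right_eq_Icc]
  rw [h5, Finset.range_eq_Ico, ← Finset.sum_Ico_consecutive _ (Nat.zero_le k) (by omega)]
  have h6 : ∑ i ∈ Finset.Ico 0 k, n.choose i * (i - 1).choose (k - 1) = 0 := by
    apply Finset.sum_eq_zero
    intro i hi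
    rw [Finset.mem_Ico] at hi
    rw [Nat.choose_eq_zero_of_lt (show i - 1 < k - 1 by omega), mul_zero]
  rw [h6, zero_add]
end
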